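/- arXiv:1404.5428 — 3 statements merged into one kernel-verified Lean document; each statement's English description precedes it below -/
import Mathlib

section
/- Let f : ℕ → ℕ be monotonically decreasing with domain {1,…,m}, and define g(p) = f(m+1−p). For an instance I with task sequence T₁,…,T_n, k agents of capacity m, construct the reversed instance I' with task sequence T_n,…,T₁ and cost function g. If x' = (x'₁,…,x'_n) is an optimal decision sequence for I' under cost ∑ g(p_t)·T'_t, then x = (x'_n,…,x'₁) is an optimal decision sequence for I under cost ∑ f(p_t)·T_t, and the two optimal costs are equal. -/
open Finset

/-- The (1-indexed) position of task `t` under decision sequence `x`: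
one plus the number of earlier tasks assigned to the same agent. -/
def posOf {n k : ℕ} (x : Fin n → Fin k) (t : Fin n) : ℕ :=
  1 + (Finset.univ.filter (fun s : Fin n => s < t ∧ x s = x t)).card

/-- A decision sequence is valid when each of the `k` agents receives exactly
`m` tasks. -/
def validSeq {n k : ℕ} (m : ℕ) (x : Fin n → Fin k) : Prop :=
  ∀ r : Fin k, (Finset.univ.filter (fun t : Fin n => x t = r)).card = m

/-- Total cost of decision sequence `x` on task sequence `T` under positional
weight function `h`. -/
def totalCost {n k : ℕ} (h : ℕ → ℕ) (T : Fin n → ℕ) (x : Fin n → Fin k) : ℕ :=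
  ∑ t : Fin n, h (posOf x t) * T t

section ReversedInstance

variable {n k m : ℕ}

lemma validSeq_comp_perm {x : Fin n → Fin k} (hx : validSeq m x) (σ : Equiv.Perm (Fin n)) :
    validSeq m (x ∘ σ) := by
  intro r
  rw [← hx r]
  exact card_equiv σ (by simp)

lemma card_filter_eq_posOf_add_card_filter_lt (x : Fin n → Fin k) (t : Fin n) :
    #{u | x u = x t} = posOf x t + #{u | t < u ∧ x u = x t} := by
  have hsplit : ∀ u, (if x u = x t then 1 else 0) = (if u < t ∧ x u = x t then 1 else 0) +
      (if u = t then 1 else 0) + (if t < u ∧ x u = x t then 1 else 0) := fun u => by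
    rcases lt_trichotomy u t with h | rfl | h
    · simp [h, h.ne, h.not_gt]
    · simp
    · simp [h, h.ne', h.not_gt]
  rw [posOf, card_filter, card_filter, card_filter, Fintype.sum_congr _ _ hsplit,
    sum_add_distrib, sum_add_distrib, Fintype.sum_ite_eq']
  ring

lemma posOf_comp_rev (x : Fin n → Fin k) (t : Fin n) :
    posOf (x ∘ Fin.rev) t = 1 + #{u | Fin.rev t < u ∧ x u = x (Fin.rev t)} := by
  rw [posOf]
  congr 1
  refine card_equiv Fin.revPerm fun s => ?_
  simp [Fin.rev_lt_rev]

lemma posOf_comp_rev_of_validSeq {x : Fin n → Fin k} (hx : validSeq m x) (t : Fin n) :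
    posOf (x ∘ Fin.rev) t = m + 1 - posOf x (Fin.rev t) := by
  have hcard := card_filter_eq_posOf_add_card_filter_lt x (Fin.rev t)
  rw [hx] at hcard
  rw [posOf_comp_rev]
  omega

lemma totalCost_comp_rev {f g : ℕ → ℕ} (hg : ∀ p, g p = f (m + 1 - p)) (T : Fin n → ℕ)
    {x : Fin n → Fin k} (hx : validSeq m x) :
    totalCost f T (x ∘ Fin.rev) = totalCost g (T ∘ Fin.rev) x :=
  Fintype.sum_equiv Fin.revPerm _ _ fun t => by
    simp [posOf_comp_rev_of_validSeq hx, hg]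

end ReversedInstance

theorem reversal_reduction_general (k m : ℕ) (f : ℕ → ℕ)
    (g : ℕ → ℕ) (hg : ∀ p, g p = f (m + 1 - p))
    (T : Fin (k * m) → ℕ) (x' : Fin (k * m) → Fin k)
    (hvalid' : validSeq m x')
    (hopt' : ∀ y : Fin (k * m) → Fin k, validSeq m y →
      totalCost g (T ∘ Fin.rev) x' ≤ totalCost g (T ∘ Fin.rev) y) :
    validSeq m (x' ∘ Fin.rev) ∧
    (∀ y : Fin (k * m) → Fin k, validSeq m y →
      totalCost f T (x' ∘ Fin.rev) ≤ totalCost f T y) ∧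
    totalCost f T (x' ∘ Fin.rev) = totalCost g (T ∘ Fin.rev) x' := by
  have hcost := totalCost_comp_rev hg T hvalid'
  refine ⟨validSeq_comp_perm hvalid' Fin.revPerm, fun y hy => ?_, hcost⟩
  have hy_rev : validSeq m (y ∘ Fin.rev) := validSeq_comp_perm hy Fin.revPerm
  calc totalCost f T (x' ∘ Fin.rev)
      = totalCost g (T ∘ Fin.rev) x' := hcost
    _ ≤ totalCost g (T ∘ Fin.rev) (y ∘ Fin.rev) := hopt' _ hy_rev
    _ = totalCost f T y := by
      rw [← totalCost_comp_rev hg T hy_rev, Function.comp_assoc, Fin.rev_involutive.comp_self,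
        Function.comp_id]

/-- Reduction between decreasing and increasing positional functions by
reversing the task sequence: let `f` be monotonically decreasing and
`g p = f (m + 1 − p)`.  If `x'` is an optimal decision sequence for the
reversed instance `I' = (T ∘ rev)` under positional cost `g`, then
`x = x' ∘ rev` is optimal for the original instance `I = T` under positional
cost `f`, and the two optimal costs are equal. -/
theorem reversal_reduction (k m : ℕ) (f : ℕ → ℕ)
    (hf : ∀ p q : ℕ, p ≤ q → f q ≤ f p)
    (g : ℕ → ℕ) (hg : ∀ p, g p = f (m + 1 - p))
    (T : Fin (k * m) → ℕ) (x' : Fin (k * m) → Fin k)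
    (hvalid' : validSeq m x')
    (hopt' : ∀ y : Fin (k * m) → Fin k, validSeq m y →
      totalCost g (T ∘ Fin.rev) x' ≤ totalCost g (T ∘ Fin.rev) y) :
    validSeq m (x' ∘ Fin.rev) ∧
    (∀ y : Fin (k * m) → Fin k, validSeq m y →
      totalCost f T (x' ∘ Fin.rev) ≤ totalCost f T y) ∧
    totalCost f T (x' ∘ Fin.rev) = totalCost g (T ∘ Fin.rev) x' :=
  reversal_reduction_general k m f g hg T x' hvalid' hopt'
end

section
/- Consider k agents with capacities 0 < m₁ ≤ m₂ ≤ … ≤ m_k, a decreasing weight function applied via g(q) (cost g(q)·T when a task is assigned to an agent of remaining capacity q, where g is increasing), and a binary task sequence with T₁ = L (the larger value). Then for any decision sequence x with x₁ = γ > 1 there exists a decision sequence x* with x*₁ = 1 whose total cost is at most that of x. -/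
/-!
Agent `r`, receiving the set of tasks `S`, pays `g (m r - j) * T s` for its `j`-th task `s`
(counting from `0`), so the cost splits over the agents. Let `γ` receive the first task `z`, let
`u` be the first task of agent `1`, and let `t` tasks of `γ` precede `u`.

If `m γ - t + 1 ≥ m 1`, swapping `z` and `u` does not increase the cost: agent `1` pays
`g (m 1) * L` for `z` instead of `g (m 1) * T u`; the tasks of `γ` strictly between `z` and `u`
each move one weight up, which telescopes against `L`; and `u` lands on the weight
`g (m γ - t + 1) ≥ g (m 1)`.

Otherwise the remaining capacity of `γ` drops to `m 1` at one of its tasks `τ < u`. There both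
agents have the same remaining capacity, so exchanging their entire futures from `τ` on leaves
the cost unchanged, and afterwards `τ` is the first task of agent `1`, preceded by `m γ - m 1`
tasks of `γ`: the first case applies (unless `τ = z`, and then we are done).
-/

open Finset

/-- Remaining capacity of agent `r` just before task `t` is allocated. -/
def remCap {n k : ℕ} (m : Fin k → ℕ) (x : Fin n → Fin k) (t : Fin n) (r : Fin k) : ℕ :=
  m r - (Finset.univ.filter (fun s : Fin n => s < t ∧ x s = r)).card

/-- Validity for variable-sized positional allocation: agent `r` receives
exactly `m r` tasks. -/
def vspaValid {n k : ℕ} (m : Fin k → ℕ) (x : Fin n → Fin k) : Prop :=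
  ∀ r : Fin k, (Finset.univ.filter (fun t : Fin n => x t = r)).card = m r

/-- VSPA cost: assigning task `t` to agent `r` while `r` has remaining
capacity `q` costs `g q * T t`. -/
def vspaCost {n k : ℕ} (g : ℕ → ℕ) (m : Fin k → ℕ) (T : Fin n → ℕ)
    (x : Fin n → Fin k) : ℕ :=
  ∑ t : Fin n, g (remCap m x t (x t)) * T t

section AgentCost

variable {α : Type*} [LinearOrder α] (g : ℕ → ℕ) (T : α → ℕ)

def agentCost (μ : ℕ) (S : Finset α) : ℕ :=
  ∑ s ∈ S, g (μ - #(S.filter (· < s))) * T s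

theorem agentCost_insert_of_forall_lt {a : α} {S : Finset α} (μ : ℕ)
    (ha : ∀ s ∈ S, a < s) :
    agentCost g T μ (insert a S) = g μ * T a + agentCost g T (μ - 1) S := by
  have haS : a ∉ S := fun h => lt_irrefl a (ha a h)
  rw [agentCost, sum_insert haS, agentCost, filter_insert, if_neg (lt_irrefl a),
    filter_eq_empty_iff.2 fun s hs => not_lt.2 (ha s hs).le, card_empty, Nat.sub_zero]
  congr 1
  refine sum_congr rfl fun s hs => ?_
  rw [filter_insert, if_pos (ha s hs), card_insert_of_notMem fun h => haS (mem_filter.1 h).1,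
    Nat.sub_sub, add_comm 1]

theorem agentCost_eq_add_filter (μ : ℕ) (S : Finset α) (τ : α) :
    agentCost g T μ S = agentCost g T μ (S.filter (· < τ)) +
      agentCost g T (μ - #(S.filter (· < τ))) (S.filter (τ ≤ ·)) := by
  rw [agentCost, ← sum_filter_add_sum_filter_not S (· < τ)]
  simp_rw [not_lt]
  congr 1
  · refine sum_congr rfl fun s hs => ?_
    rw [filter_filter,
      filter_congr fun w _ => and_iff_right_of_imp fun h => h.trans (mem_filter.1 hs).2]
  · refine sum_congr rfl fun s hs => ?_
    have hτs : τ ≤ s := (mem_filter.1 hs).2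
    have hsplit := card_filter_add_card_filter_not (s := S.filter (· < s)) (· < τ)
    rw [filter_filter, filter_filter, filter_congr fun w _ => and_iff_right_of_imp
      fun h => h.trans_le hτs] at hsplit
    simp_rw [not_lt] at hsplit
    rw [← hsplit, Nat.sub_sub, filter_filter]
    simp_rw [and_comm]

theorem agentCost_add_le (hg : Monotone g) {L : ℕ} (S : Finset α) (hT : ∀ s ∈ S, T s ≤ L)
    (μ : ℕ) : agentCost g T μ S + g (μ - #S) * L ≤ agentCost g T (μ - 1) S + g μ * L := by
  induction S using Finset.induction_on_min generalizing μ with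
  | empty => simp [agentCost]
  | insert a S ha ih =>
    have haS : a ∉ S := fun h => lt_irrefl a (ha a h)
    have hstep := ih (fun s hs => hT s (mem_insert_of_mem hs)) (μ - 1)
    have hswap := mul_add_mul_le_mul_add_mul (hg (Nat.sub_le μ 1)) (hT a (mem_insert_self a S))
    rw [agentCost_insert_of_forall_lt g T μ ha, agentCost_insert_of_forall_lt g T (μ - 1) ha,
      card_insert_of_notMem haS, show μ - (#S + 1) = μ - 1 - #S by omega]
    omega

theorem exists_mem_card_filter_lt_eq {S : Finset α} {d : ℕ} (hd : d < #S) :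
    ∃ τ ∈ S, #(S.filter (· < τ)) = d := by
  set e := S.orderEmbOfFin rfl
  refine ⟨e ⟨d, hd⟩, S.orderEmbOfFin_mem rfl _, ?_⟩
  have hfilter : S.filter (· < e ⟨d, hd⟩) = (Iio ⟨d, hd⟩).map e.toEmbedding := by
    ext s
    simp only [mem_filter, mem_map, mem_Iio, RelEmbedding.coe_toEmbedding]
    constructor
    · rintro ⟨hs, hlt⟩
      obtain ⟨j, rfl⟩ : s ∈ Set.range e := by rw [range_orderEmbOfFin]; exact hs
      exact ⟨j, e.lt_iff_lt.1 hlt, rfl⟩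
    · rintro ⟨j, hj, rfl⟩
      exact ⟨S.orderEmbOfFin_mem rfl j, e.lt_iff_lt.2 hj⟩
  rw [hfilter, card_map, Fin.card_Iio]

theorem agentCost_swap_le (hg : Monotone g) {a b : ℕ} {P Q : Finset α} {z u : α}
    (hz : ∀ s, z ≤ s) (hTz : ∀ s, T s ≤ T z) (hzQ : z ∈ Q) (hzP : z ∉ P) (huP : u ∈ P)
    (huQ : u ∉ Q) (hu : ∀ s ∈ P, u ≤ s) (hcap : a + #(Q.filter (· < u)) ≤ b + 1) :
    agentCost g T a (insert z (P.erase u)) + agentCost g T b (insert u (Q.erase z)) ≤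
      agentCost g T a P + agentCost g T b Q := by
  set S := (Q.erase z).filter (· < u)
  have hzu : z < u := (hz u).lt_of_ne fun h => huQ (h ▸ hzQ)
  have hzP₀ : ∀ s ∈ P.erase u, z < s :=
    fun s hs => (hz s).lt_of_ne fun h => hzP (h ▸ mem_of_mem_erase hs)
  have huP₀ : ∀ s ∈ P.erase u, u < s :=
    fun s hs => (hu s (mem_of_mem_erase hs)).lt_of_ne (ne_of_mem_erase hs).symm
  have hzQ₀ : ∀ s ∈ Q.erase z, z < s := fun s hs => (hz s).lt_of_ne (ne_of_mem_erase hs).symm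
  have huQ₀ : ∀ s ∈ (Q.erase z).filter (u ≤ ·), u < s := fun s hs =>
    (mem_filter.1 hs).2.lt_of_ne fun h => huQ (h ▸ mem_of_mem_erase (mem_filter.1 hs).1)
  have hcardS : #(Q.filter (· < u)) = #S + 1 := by
    rw [← insert_erase hzQ, filter_insert, if_pos hzu,
      card_insert_of_notMem fun h => notMem_erase z Q (mem_filter.1 h).1]
  have hP : agentCost g T a P = g a * T u + agentCost g T (a - 1) (P.erase u) := by
    conv_lhs => rw [← insert_erase huP]
    exact agentCost_insert_of_forall_lt g T a huP₀
  have hQ : agentCost g T b Q = g b * T z + agentCost g T (b - 1) (Q.erase z) := by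
    conv_lhs => rw [← insert_erase hzQ]
    exact agentCost_insert_of_forall_lt g T b hzQ₀
  have hQ' : agentCost g T b (insert u (Q.erase z)) = agentCost g T b S +
      (g (b - #S) * T u + agentCost g T (b - #S - 1) ((Q.erase z).filter (u ≤ ·))) := by
    rw [agentCost_eq_add_filter g T b _ u, filter_insert, if_neg (lt_irrefl u), filter_insert,
      if_pos le_rfl, agentCost_insert_of_forall_lt g T _ huQ₀]
  have hQ₀ : agentCost g T (b - 1) (Q.erase z) = agentCost g T (b - 1) S +
      agentCost g T (b - 1 - #S) ((Q.erase z).filter (u ≤ ·)) :=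
    agentCost_eq_add_filter g T (b - 1) (Q.erase z) u
  -- The tasks of `Q` before `u` each move one weight up, paid for by `z` leaving `Q` (`hshift`),
  -- and `u`, `z` trade the weights `g (b - #S) ≥ g a` (`hswap`).
  have hshift := agentCost_add_le g T hg S (fun s _ => hTz s) b
  have hswap := mul_add_mul_le_mul_add_mul (hg (show a ≤ b - #S by omega)) (hTz u)
  rw [hP, agentCost_insert_of_forall_lt g T a hzP₀, hQ, hQ', hQ₀,
    show b - #S - 1 = b - 1 - #S by omega]
  omega

end AgentCost

section Allocation

variable {n k : ℕ}

def tasksOf (x : Fin n → Fin k) (r : Fin k) : Finset (Fin n) := univ.filter (x · = r)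

theorem remCap_eq (m : Fin k → ℕ) (x : Fin n → Fin k) (t : Fin n) (r : Fin k) :
    remCap m x t r = m r - #((tasksOf x r).filter (· < t)) := by
  rw [remCap, tasksOf, filter_filter]
  simp_rw [and_comm]

theorem card_tasksOf {m : Fin k → ℕ} {x : Fin n → Fin k} (hx : vspaValid m x) (r : Fin k) :
    #(tasksOf x r) = m r :=
  hx r

theorem filter_tasksOf_lt_eq_empty {x : Fin n → Fin k} {u : Fin n} {p : Fin k}
    (h : ∀ s < u, x s ≠ p) : (tasksOf x p).filter (· < u) = ∅ :=
  filter_eq_empty_iff.2 fun s hs hsu => h s hsu (mem_filter.1 hs).2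

theorem vspaCost_eq_sum_agentCost (g : ℕ → ℕ) (m : Fin k → ℕ) (T : Fin n → ℕ)
    (x : Fin n → Fin k) : vspaCost g m T x = ∑ r, agentCost g T (m r) (tasksOf x r) := by
  rw [vspaCost, ← sum_fiberwise univ x]
  refine sum_congr rfl fun r _ => sum_congr rfl fun t ht => ?_
  rw [(mem_filter.1 ht).2, remCap_eq]

variable {g : ℕ → ℕ} {m : Fin k → ℕ} {T : Fin n → ℕ}

theorem vspaCost_le_of_agentCost_le {x y : Fin n → Fin k} {p q : Fin k} (hpq : p ≠ q)
    (hrest : ∀ r, r ≠ p → r ≠ q → tasksOf y r = tasksOf x r)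
    (hcost : agentCost g T (m p) (tasksOf y p) + agentCost g T (m q) (tasksOf y q) ≤
      agentCost g T (m p) (tasksOf x p) + agentCost g T (m q) (tasksOf x q)) :
    vspaCost g m T y ≤ vspaCost g m T x := by
  have hq : q ∈ univ.erase p := mem_erase.2 ⟨hpq.symm, mem_univ q⟩
  have hsplit : ∀ w : Fin n → Fin k, vspaCost g m T w =
      agentCost g T (m p) (tasksOf w p) + (agentCost g T (m q) (tasksOf w q) +
        ∑ r ∈ (univ.erase p).erase q, agentCost g T (m r) (tasksOf w r)) := by
    intro w
    rw [vspaCost_eq_sum_agentCost, ← add_sum_erase _ _ (mem_univ p), ← add_sum_erase _ _ hq]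
  rw [hsplit, hsplit, sum_congr rfl fun r hr => by
    rw [hrest r (ne_of_mem_erase (mem_of_mem_erase hr)) (ne_of_mem_erase hr)]]
  omega

theorem vspaValid_comp_perm {x : Fin n → Fin k} (hx : vspaValid m x)
    (σ : Equiv.Perm (Fin n)) : vspaValid m (x ∘ σ) := fun r => by
  rw [← hx r]
  exact card_equiv σ (by simp)

theorem tasksOf_comp_swap_self {x : Fin n → Fin k} {z u : Fin n} (hzu : x z ≠ x u) :
    tasksOf (x ∘ Equiv.swap z u) (x u) = insert z ((tasksOf x (x u)).erase u) := by
  ext s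
  by_cases hsz : s = z <;> by_cases hsu : s = u <;>
    simp_all [tasksOf, Equiv.swap_apply_of_ne_of_ne]

theorem tasksOf_comp_swap_of_ne {x : Fin n → Fin k} {z u : Fin n} {r : Fin k}
    (hz : r ≠ x z) (hu : r ≠ x u) : tasksOf (x ∘ Equiv.swap z u) r = tasksOf x r := by
  ext s
  by_cases hsz : s = z <;> by_cases hsu : s = u <;>
    simp_all [tasksOf, Equiv.swap_apply_of_ne_of_ne, eq_comm]

theorem vspaCost_comp_swap_le (hg : Monotone g) {x : Fin n → Fin k} {z u : Fin n}
    (hz : ∀ s, z ≤ s) (hTz : ∀ s, T s ≤ T z) (hzu : x z ≠ x u)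
    (hfirst : ∀ s < u, x s ≠ x u)
    (hcap : m (x u) + #((tasksOf x (x z)).filter (· < u)) ≤ m (x z) + 1) :
    vspaCost g m T (x ∘ Equiv.swap z u) ≤ vspaCost g m T x := by
  refine vspaCost_le_of_agentCost_le hzu.symm
    (fun r hu hz => tasksOf_comp_swap_of_ne hz hu) ?_
  rw [tasksOf_comp_swap_self hzu, Equiv.swap_comm, tasksOf_comp_swap_self hzu.symm]
  exact agentCost_swap_le g T hg hz hTz (by simp [tasksOf]) (by simp [tasksOf, hzu])
    (by simp [tasksOf]) (by simp [tasksOf, hzu.symm])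
    (fun s hs => not_lt.1 fun h => hfirst s h (mem_filter.1 hs).2) hcap

theorem exists_reassign_first_of_add_card_le (hg : Monotone g) {x : Fin n → Fin k}
    (hx : vspaValid m x) {z u : Fin n} {p q : Fin k} (hz : ∀ s, z ≤ s)
    (hTz : ∀ s, T s ≤ T z)
    (hq : x z = q) (hpq : p ≠ q) (hu : x u = p) (hfirst : ∀ s < u, x s ≠ p)
    (hcap : m p + #((tasksOf x q).filter (· < u)) ≤ m q + 1) :
    ∃ y, vspaValid m y ∧ y z = p ∧ vspaCost g m T y ≤ vspaCost g m T x := by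
  subst hu hq
  exact ⟨x ∘ Equiv.swap z u, vspaValid_comp_perm hx _, by simp,
    vspaCost_comp_swap_le hg hz hTz hpq.symm hfirst hcap⟩

def swapAgentsFrom (x : Fin n → Fin k) (τ : Fin n) (p q : Fin k) : Fin n → Fin k :=
  fun s => if τ ≤ s then Equiv.swap p q (x s) else x s

theorem remCap_congr {x y : Fin n → Fin k} {t : Fin n} (h : ∀ s < t, y s = x s) :
    remCap m y t = remCap m x t := by
  funext r
  unfold remCap
  congr 2
  exact filter_congr fun s _ => and_congr_right fun hs => by rw [h s hs]

theorem remCap_eq_sub {x : Fin n → Fin k} {τ t : Fin n} (hτt : τ ≤ t) (r : Fin k) :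
    remCap m x t r = remCap m x τ r - #(univ.filter fun s => τ ≤ s ∧ s < t ∧ x s = r) := by
  unfold remCap
  rw [Nat.sub_sub, ← card_union_of_disjoint]
  · congr 2
    ext s
    simp only [mem_filter, mem_univ, true_and, mem_union]
    constructor
    · rintro ⟨hst, hxs⟩
      exact (lt_or_ge s τ).imp (fun h => ⟨h, hxs⟩) fun h => ⟨h, hst, hxs⟩
    · rintro (⟨hs, hxs⟩ | ⟨-, hs, hxs⟩)
      exacts [⟨hs.trans_le hτt, hxs⟩, ⟨hs, hxs⟩]
  · exact disjoint_filter.2 fun s _ h1 h2 => not_le.2 h1.1 h2.1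

theorem card_filter_eq_add (x : Fin n → Fin k) (τ : Fin n) (r : Fin k) :
    #(univ.filter fun s => x s = r) = #(univ.filter fun s => s < τ ∧ x s = r) +
      #(univ.filter fun s => τ ≤ s ∧ x s = r) := by
  rw [← card_filter_add_card_filter_not (s := univ.filter fun s => x s = r) (· < τ)]
  simp_rw [filter_filter, not_lt, and_comm]

theorem card_filter_le_eq_remCap {x : Fin n → Fin k} (hx : vspaValid m x) (τ : Fin n)
    (r : Fin k) : #(univ.filter fun s => τ ≤ s ∧ x s = r) = remCap m x τ r := by
  have := card_filter_eq_add x τ r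
  rw [hx r] at this
  unfold remCap
  omega

section SwapAgentsFrom

variable {x : Fin n → Fin k} {τ : Fin n} {p q : Fin k}

theorem swapAgentsFrom_of_lt {s : Fin n} (hs : s < τ) : swapAgentsFrom x τ p q s = x s :=
  if_neg (not_le.2 hs)

theorem swapAgentsFrom_of_le {s : Fin n} (hs : τ ≤ s) :
    swapAgentsFrom x τ p q s = Equiv.swap p q (x s) :=
  if_pos hs

theorem remCap_swap_eq (h : remCap m x τ p = remCap m x τ q) (r : Fin k) :
    remCap m x τ (Equiv.swap p q r) = remCap m x τ r := by
  rcases eq_or_ne r p with rfl | hp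
  · simp [h]
  rcases eq_or_ne r q with rfl | hq
  · simp [h]
  rw [Equiv.swap_apply_of_ne_of_ne hp hq]

theorem remCap_swapAgentsFrom (h : remCap m x τ p = remCap m x τ q) {t : Fin n} (ht : τ ≤ t)
    (r : Fin k) : remCap m (swapAgentsFrom x τ p q) t (Equiv.swap p q r) = remCap m x t r := by
  rw [remCap_eq_sub ht, remCap_eq_sub ht, remCap_congr fun s hs => swapAgentsFrom_of_lt hs,
    remCap_swap_eq h]
  congr 2
  refine filter_congr fun s _ => and_congr_right fun hs => and_congr_right fun _ => ?_
  rw [swapAgentsFrom_of_le hs, (Equiv.swap p q).apply_eq_iff_eq]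

theorem vspaCost_swapAgentsFrom (h : remCap m x τ p = remCap m x τ q) :
    vspaCost g m T (swapAgentsFrom x τ p q) = vspaCost g m T x := by
  refine sum_congr rfl fun t _ => ?_
  rcases le_or_gt τ t with ht | ht
  · rw [swapAgentsFrom_of_le ht, remCap_swapAgentsFrom h ht]
  · rw [swapAgentsFrom_of_lt ht, remCap_congr fun s hs => swapAgentsFrom_of_lt (hs.trans ht)]

theorem vspaValid_swapAgentsFrom (hx : vspaValid m x)
    (h : remCap m x τ p = remCap m x τ q) : vspaValid m (swapAgentsFrom x τ p q) := fun r => by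
  have hlt : (univ.filter fun s => s < τ ∧ swapAgentsFrom x τ p q s = r) =
      univ.filter fun s => s < τ ∧ x s = r :=
    filter_congr fun s _ => and_congr_right fun hs => by rw [swapAgentsFrom_of_lt hs]
  have hle : (univ.filter fun s => τ ≤ s ∧ swapAgentsFrom x τ p q s = r) =
      univ.filter fun s => τ ≤ s ∧ x s = Equiv.swap p q r :=
    filter_congr fun s _ => and_congr_right fun hs => by
      rw [swapAgentsFrom_of_le hs, Equiv.swap_apply_eq_iff]
  rw [card_filter_eq_add _ τ, hlt, hle, card_filter_le_eq_remCap hx, remCap_swap_eq h,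
    ← card_filter_le_eq_remCap hx, ← card_filter_eq_add, hx r]

end SwapAgentsFrom

theorem exists_reassign_first_of_lt_add_card (hg : Monotone g) {x : Fin n → Fin k}
    (hx : vspaValid m x) {z u : Fin n} {p q : Fin k} (hz : ∀ s, z ≤ s)
    (hTz : ∀ s, T s ≤ T z)
    (hq : x z = q) (hp : m p ≤ m q) (hu : x u = p) (hfirst : ∀ s < u, x s ≠ p)
    (hcap : m q + 1 < m p + #((tasksOf x q).filter (· < u))) :
    ∃ y, vspaValid m y ∧ y z = p ∧ vspaCost g m T y ≤ vspaCost g m T x := by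
  have hpq : p ≠ q := by
    rintro rfl
    rw [filter_tasksOf_lt_eq_empty hfirst, card_empty] at hcap
    omega
  have hpos : 0 < m p := card_tasksOf hx p ▸ card_pos.2 ⟨u, by simp [tasksOf, hu]⟩
  -- at `τ` the remaining capacity of `q` has dropped to `m p`, that of `p`
  obtain ⟨τ, hτq, hτ⟩ := exists_mem_card_filter_lt_eq (S := tasksOf x q) (d := m q - m p)
    (by rw [card_tasksOf hx]; omega)
  have hτu : τ < u := not_le.1 fun h => by
    have : #((tasksOf x q).filter (· < u)) ≤ #((tasksOf x q).filter (· < τ)) :=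
      card_le_card fun s hs =>
        mem_filter.2 ⟨(mem_filter.1 hs).1, (mem_filter.1 hs).2.trans_le h⟩
    omega
  have hrem : remCap m x τ p = remCap m x τ q := by
    rw [remCap_eq, remCap_eq, hτ,
      filter_tasksOf_lt_eq_empty fun s hs => hfirst s (hs.trans hτu), card_empty]
    omega
  have hcost := vspaCost_swapAgentsFrom (g := g) (T := T) hrem
  rcases (hz τ).eq_or_lt with rfl | hzτ
  · refine ⟨_, vspaValid_swapAgentsFrom hx hrem, ?_, hcost.le⟩
    rw [swapAgentsFrom_of_le le_rfl, hq, Equiv.swap_apply_right]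
  have hyτq : (tasksOf (swapAgentsFrom x τ p q) q).filter (· < τ) =
      (tasksOf x q).filter (· < τ) := by
    ext s
    simp only [tasksOf, mem_filter, mem_univ, true_and]
    exact and_congr_left fun hs => by rw [swapAgentsFrom_of_lt hs]
  obtain ⟨w, hw, hwz, hwc⟩ := exists_reassign_first_of_add_card_le hg
    (vspaValid_swapAgentsFrom hx hrem) hz hTz (by rw [swapAgentsFrom_of_lt hzτ, hq]) hpq
    (by rw [swapAgentsFrom_of_le le_rfl, (mem_filter.1 hτq).2, Equiv.swap_apply_right])
    (fun s hs => by rw [swapAgentsFrom_of_lt hs]; exact hfirst s (hs.trans hτu))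
    (by rw [hyτq, hτ]; omega)
  exact ⟨w, hw, hwz, hwc.trans hcost.le⟩

end Allocation

/-- If the first task is an `L` (the larger value), it is optimal to assign it
to agent `1` (the smallest agent): any decision sequence starting with an agent
`γ > 1` is dominated by one starting with agent `1`. -/
theorem first_L_to_smallest_agent (k : ℕ) (hk : 0 < k) (m : Fin k → ℕ)
    (hmpos : ∀ r, 0 < m r) (hmono : Monotone m)
    (hn : 0 < ∑ r : Fin k, m r)
    (g : ℕ → ℕ) (hg : Monotone g)
    (T : Fin (∑ r : Fin k, m r) → ℕ) (H L : ℕ) (hHL : H < L)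
    (hbin : ∀ t, T t = H ∨ T t = L)
    (hT1 : T ⟨0, hn⟩ = L)
    (x : Fin (∑ r : Fin k, m r) → Fin k) (hx : vspaValid m x)
    (hx1 : x ⟨0, hn⟩ ≠ ⟨0, hk⟩) :
    ∃ xstar : Fin (∑ r : Fin k, m r) → Fin k,
      vspaValid m xstar ∧ xstar ⟨0, hn⟩ = ⟨0, hk⟩ ∧
      vspaCost g m T xstar ≤ vspaCost g m T x := by
  have hz : ∀ s : Fin (∑ r : Fin k, m r), ⟨0, hn⟩ ≤ s := fun s => Nat.zero_le s.val
  have hTz : ∀ s, T s ≤ T ⟨0, hn⟩ := fun s => by rcases hbin s with h | h <;> omega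
  obtain ⟨u, hu, hmin⟩ := (tasksOf x ⟨0, hk⟩).exists_min_image id
    (card_pos.1 (card_tasksOf hx _ ▸ hmpos _))
  have hfirst : ∀ s < u, x s ≠ ⟨0, hk⟩ := fun s hsu hs =>
    (hmin s (by simp [tasksOf, hs])).not_gt hsu
  replace hu : x u = ⟨0, hk⟩ := (mem_filter.1 hu).2
  by_cases hcap :
      m ⟨0, hk⟩ + #((tasksOf x (x ⟨0, hn⟩)).filter (· < u)) ≤ m (x ⟨0, hn⟩) + 1
  · exact exists_reassign_first_of_add_card_le hg hx hz hTz rfl hx1.symm hu hfirst hcap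
  · exact exists_reassign_first_of_lt_add_card hg hx hz hTz rfl (hmono (Nat.zero_le _)) hu
      hfirst (by omega)
end

section
/- Fix a look-ahead setup (r,h) with 1 ≤ r ≤ h ≤ k. At time t define Z_L(t) = ∑_{i=1}^{h−1} min{Q_i(t), Q_{r−1}(t)} and Z_H(t) = ∑_{i=r}^{h} (Q_i(t) − Q_{r−1}(t)), where Q_i(t) are remaining capacities evolving by decrementing one coordinate per step while preserving nondecreasing order (coordinate r−1 is only decremented when Q_{r−2} < Q_{r−1}). Then for each step, Z_H(t) + Z_L(t) decreases by at most 1, and hence Z_H(i) + Z_L(i) + i − 1 ≤ Z_H(j) + Z_L(j) + j − 1 whenever i < j. -/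
/-!
Write `a = Q_{r-1}`. A step that does not touch coordinate `r - 1` leaves `a` fixed, and every
summand of `Z_H` and of `Z_L` is a function of a single `Q_i` that drops by at most one when `Q_i`
does. So `Z_H + Z_L` drops by at most one, unless the decremented coordinate `c` lies in both
`[r, h]` and `[1, h - 1]`; but then the choice rule gives `a < Q_c` (or `a = Q_0 = 0`), so the
`Z_L` summand `min Q_c a` does not move. A step at `c = r - 1` with `a > 0` raises each of the
`h + 1 - r` summands of `Z_H` by one and, since the choice rule puts `Q_1, …, Q_{r-2}` strictly
below `a`, lowers exactly the `h + 1 - r` summands of `Z_L` of index at least `r - 1`.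
Summing the per-step bound makes `Z_H + Z_L + t` monotone in `t`.
-/

open Finset

/-- H-zone size for look-ahead setup `(r,h)` at time `t`:
`Z_H(t) = ∑_{i=r}^{h} (Q_i(t) − Q_{r−1}(t))`. -/
def ZH (Q : ℕ → ℕ → ℕ) (r h t : ℕ) : ℕ :=
  ∑ i ∈ Finset.Icc r h, (Q t i - Q t (r - 1))

/-- L-zone size for look-ahead setup `(r,h)` at time `t`:
`Z_L(t) = ∑_{i=1}^{h−1} min (Q_i(t)) (Q_{r−1}(t))`. -/
def ZL (Q : ℕ → ℕ → ℕ) (r h t : ℕ) : ℕ :=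
  ∑ i ∈ Finset.Icc 1 (h - 1), min (Q t i) (Q t (r - 1))

open Function

section UpdateSums

variable {ι : Type*} [DecidableEq ι] {s : Finset ι} {g : ℕ → ℕ} {q : ι → ℕ} {c : ι}

theorem sum_comp_update_eq {v : ℕ} (hv : c ∈ s → g v = g (q c)) :
    ∑ i ∈ s, g (update q c v i) = ∑ i ∈ s, g (q i) := by
  refine sum_congr rfl fun i hi => ?_
  rcases eq_or_ne i c with rfl | hic
  · rw [update_self, hv hi]
  · rw [update_of_ne hic]

theorem sum_comp_le_sum_comp_update_pred_add_one (hg : ∀ n, g n ≤ g (n - 1) + 1) :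
    ∑ i ∈ s, g (q i) ≤ ∑ i ∈ s, g (update q c (q c - 1) i) + 1 := by
  by_cases hc : c ∈ s
  · have hrest :
        ∑ i ∈ s.erase c, g (update q c (q c - 1) i) = ∑ i ∈ s.erase c, g (q i) :=
      sum_comp_update_eq fun h => absurd h (notMem_erase c s)
    rw [← add_sum_erase s _ hc, ← add_sum_erase s _ hc, update_self, hrest]
    linarith [hg (q c)]
  · rw [sum_comp_update_eq fun h => absurd h hc]
    exact Nat.le_succ _

end UpdateSums

theorem apply_lt_apply_of_pred_lt {k : ℕ} {q : ℕ → ℕ}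
    (hmono : ∀ i j, i ≤ j → j ≤ k → q i ≤ q j)
    {c i : ℕ} (hck : c ≤ k) (hc : c = 1 ∨ q (c - 1) < q c) (hi : 1 ≤ i) (hic : i < c) :
    q i < q c := by
  rcases hc with rfl | hc
  · omega
  · exact (hmono i (c - 1) (by omega) (by omega)).trans_lt hc

section Step

variable {Q : ℕ → ℕ → ℕ} {r h t c : ℕ}

theorem ZH_succ_of_eq_pred (hQ : Q (t + 1) = update (Q t) c (Q t c - 1)) (hc : c + 1 = r)
    (hpos : 0 < Q t c) (hge : ∀ i ∈ Icc r h, Q t c ≤ Q t i) :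
    ZH Q r h (t + 1) = ZH Q r h t + (h + 1 - r) := by
  have hterm : ∀ i ∈ Icc r h, Q (t + 1) i - Q (t + 1) (r - 1) = (Q t i - Q t (r - 1)) + 1 := by
    intro i hi
    have := hge i hi
    rw [mem_Icc] at hi
    rw [hQ, ← hc, Nat.add_sub_cancel, update_self, update_of_ne (show i ≠ c by omega)]
    omega
  rw [ZH, ZH, sum_congr rfl hterm, sum_add_distrib, sum_const, smul_eq_mul, mul_one,
    Nat.card_Icc]

theorem ZL_succ_of_eq_pred (hQ : Q (t + 1) = update (Q t) c (Q t c - 1)) (hc : c + 1 = r)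
    (hc1 : 1 ≤ c) (hpos : 0 < Q t c) (hlt : ∀ i, 1 ≤ i → i < c → Q t i < Q t c)
    (hge : ∀ i ∈ Icc c (h - 1), Q t c ≤ Q t i) :
    ZL Q r h t = ZL Q r h (t + 1) + (h + 1 - r) := by
  have hterm : ∀ i ∈ Icc 1 (h - 1), min (Q t i) (Q t (r - 1)) =
      min (Q (t + 1) i) (Q (t + 1) (r - 1)) + if c ≤ i then 1 else 0 := by
    intro i hi
    rw [mem_Icc] at hi
    rw [hQ, ← hc, Nat.add_sub_cancel, update_self]
    rcases eq_or_ne i c with rfl | hic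
    · simp only [update_self, le_refl, if_true]
      omega
    · rw [update_of_ne hic]
      split_ifs with hci
      · have := hge i (mem_Icc.2 ⟨hci, hi.2⟩)
        omega
      · have := hlt i hi.1 (by omega)
        omega
  have hcount : (Icc 1 (h - 1)).filter (c ≤ ·) = Icc c (h - 1) := by
    ext i
    simp only [mem_filter, mem_Icc]
    omega
  rw [ZL, ZL, sum_congr rfl hterm, sum_add_distrib, sum_boole, hcount, Nat.cast_id,
    Nat.card_Icc]
  omega

theorem ZH_add_ZL_le_succ_add_one_of_ne (hQ : Q (t + 1) = update (Q t) c (Q t c - 1))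
    (hc : c ≠ r - 1)
    (hmin : c ∈ Icc r h → min (Q t c - 1) (Q t (r - 1)) = min (Q t c) (Q t (r - 1))) :
    ZH Q r h t + ZL Q r h t ≤ ZH Q r h (t + 1) + ZL Q r h (t + 1) + 1 := by
  set a := Q t (r - 1)
  have ha : Q (t + 1) (r - 1) = a := by rw [hQ, update_of_ne hc.symm]
  have hZH : ZH Q r h (t + 1) = ∑ i ∈ Icc r h, (· - a) (update (Q t) c (Q t c - 1) i) := by
    rw [ZH, ha, hQ]
  have hZL :
      ZL Q r h (t + 1) = ∑ i ∈ Icc 1 (h - 1), (min · a) (update (Q t) c (Q t c - 1) i) := by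
    rw [ZL, ha, hQ]
  by_cases hcs : c ∈ Icc r h
  · have hH : ZH Q r h t ≤ ZH Q r h (t + 1) + 1 := by
      rw [hZH, ZH]
      exact sum_comp_le_sum_comp_update_pred_add_one (g := (· - a)) fun n => by omega
    have hL : ZL Q r h (t + 1) = ZL Q r h t := by
      rw [hZL, ZL]
      exact sum_comp_update_eq (g := (min · a)) fun _ => hmin hcs
    omega
  · have hH : ZH Q r h (t + 1) = ZH Q r h t := by
      rw [hZH, ZH]
      exact sum_comp_update_eq (g := (· - a)) fun h => absurd h hcs
    have hL : ZL Q r h t ≤ ZL Q r h (t + 1) + 1 := by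
      rw [hZL, ZL]
      exact sum_comp_le_sum_comp_update_pred_add_one (g := (min · a)) fun n => by omega
    omega

theorem ZH_add_ZL_succ_of_eq_pred (hQ : Q (t + 1) = update (Q t) c (Q t c - 1))
    (hc : c + 1 = r) (hc1 : 1 ≤ c) (hlt : ∀ i, 1 ≤ i → i < c → Q t i < Q t c)
    (hge : ∀ i, c ≤ i → i ≤ h → Q t c ≤ Q t i) :
    ZH Q r h t + ZL Q r h t = ZH Q r h (t + 1) + ZL Q r h (t + 1) := by
  rcases Nat.eq_zero_or_pos (Q t c) with hzero | hpos
  · have hfix : Q (t + 1) = Q t := by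
      rw [hQ]
      exact update_eq_self_iff.2 (show Q t c - 1 = Q t c by omega)
    simp only [ZH, ZL, hfix]
  · have hH : ZH Q r h (t + 1) = ZH Q r h t + (h + 1 - r) :=
      ZH_succ_of_eq_pred hQ hc hpos fun i hi =>
        hge i (by rw [mem_Icc] at hi; omega) (mem_Icc.1 hi).2
    have hL : ZL Q r h t = ZL Q r h (t + 1) + (h + 1 - r) :=
      ZL_succ_of_eq_pred hQ hc hc1 hpos hlt fun i hi =>
        hge i (mem_Icc.1 hi).1 (by rw [mem_Icc] at hi; omega)
    omega

theorem ZH_add_ZL_le_succ_add_one {k : ℕ} (hQ : Q (t + 1) = update (Q t) c (Q t c - 1))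
    (hc1 : 1 ≤ c) (hck : c ≤ k) (hhk : h ≤ k) (hzero : Q t 0 = 0)
    (hmono : ∀ i j, i ≤ j → j ≤ k → Q t i ≤ Q t j)
    (hchoice : c = 1 ∨ Q t (c - 1) < Q t c) :
    ZH Q r h t + ZL Q r h t ≤ ZH Q r h (t + 1) + ZL Q r h (t + 1) + 1 := by
  have hlt : ∀ i, 1 ≤ i → i < c → Q t i < Q t c := fun _ =>
    apply_lt_apply_of_pred_lt hmono hck hchoice
  by_cases hc : c + 1 = r
  · have := ZH_add_ZL_succ_of_eq_pred hQ hc hc1 hlt fun i hci hih =>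
      hmono c i hci (hih.trans hhk)
    omega
  · refine ZH_add_ZL_le_succ_add_one_of_ne hQ (by omega) fun hcs => ?_
    rw [mem_Icc] at hcs
    have ha : Q t (r - 1) = 0 ∨ Q t (r - 1) < Q t c := by
      rcases Nat.eq_zero_or_pos (r - 1) with hr | hr
      · exact .inl (hr ▸ hzero)
      · exact .inr (hlt (r - 1) hr (by omega))
    omega

end Step

theorem monotone_add_self_of_le_succ_add_one {f : ℕ → ℕ} (hf : ∀ t, f t ≤ f (t + 1) + 1) :
    Monotone fun t => f t + t :=
  monotone_nat_of_le_succ fun t => by have := hf t; omega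

theorem lookahead_horizon_monotone_general (k r h : ℕ)
    (hhk : h ≤ k)
    (Q : ℕ → ℕ → ℕ) (x : ℕ → ℕ)
    (hx : ∀ t, 1 ≤ x t ∧ x t ≤ k)
    (hzero : ∀ t, Q t 0 = 0)
    (hstep : ∀ t, Q (t + 1) = Function.update (Q t) (x t) (Q t (x t) - 1))
    (hmono : ∀ t, ∀ i j : ℕ, i ≤ j → j ≤ k → Q t i ≤ Q t j)
    (hchoice : ∀ t, x t = 1 ∨ Q t (x t - 1) < Q t (x t)) :
    (∀ t, ZH Q r h t + ZL Q r h t ≤ ZH Q r h (t + 1) + ZL Q r h (t + 1) + 1) ∧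
    (∀ i j : ℕ, i < j →
      ZH Q r h i + ZL Q r h i + i - 1 ≤ ZH Q r h j + ZL Q r h j + j - 1) := by
  have hdrop : ∀ t, ZH Q r h t + ZL Q r h t ≤ ZH Q r h (t + 1) + ZL Q r h (t + 1) + 1 :=
    fun t => ZH_add_ZL_le_succ_add_one (hstep t) (hx t).1 (hx t).2 hhk (hzero t) (hmono t)
      (hchoice t)
  exact ⟨hdrop, fun i j hij =>
    Nat.sub_le_sub_right (monotone_add_self_of_le_succ_add_one hdrop hij.le) 1⟩

/-- Horizon monotonicity: with capacities `Q t 1 ≤ … ≤ Q t k` (and the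
convention `Q t 0 = 0`) evolving by decrementing one coordinate `x t ∈ [1,k]`
per step, never decrementing a coordinate while the previous coordinate has
equal value, the quantity `Z_H + Z_L` decreases by at most `1` per step, and
hence the look-ahead horizon `Z_H(t) + Z_L(t) + t − 1` never decreases. -/
theorem lookahead_horizon_monotone (k r h : ℕ)
    (hr : 1 ≤ r) (hrh : r ≤ h) (hhk : h ≤ k)
    (Q : ℕ → ℕ → ℕ) (x : ℕ → ℕ)
    (hx : ∀ t, 1 ≤ x t ∧ x t ≤ k)
    (hzero : ∀ t, Q t 0 = 0)
    (hstep : ∀ t, Q (t + 1) = Function.update (Q t) (x t) (Q t (x t) - 1))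
    (hmono : ∀ t, ∀ i j : ℕ, i ≤ j → j ≤ k → Q t i ≤ Q t j)
    (hchoice : ∀ t, x t = 1 ∨ Q t (x t - 1) < Q t (x t)) :
    (∀ t, ZH Q r h t + ZL Q r h t ≤ ZH Q r h (t + 1) + ZL Q r h (t + 1) + 1) ∧
    (∀ i j : ℕ, i < j →
      ZH Q r h i + ZL Q r h i + i - 1 ≤ ZH Q r h j + ZL Q r h j + j - 1) :=
  lookahead_horizon_monotone_general k r h hhk Q x hx hzero hstep hmono hchoice
end
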